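/- Suppose Q + Diag(α) is negative definite, βᵢ > 0 for all i, and σ̄ ∈ S⁺_α is a critical point of the β-perturbed canonical dual function P^d_{αβ}. If in addition βᵢ > (8/3)σ̄ᵢ for every i, then rounding each component of x̄ = G_α(σ̄)⁻¹ c to the nearest integer yields a vector x* ∈ {−1,1}ⁿ, i.e., x* is feasible for the primal max-cut problem. -/

import Mathlib

open Matrix

/-!
At a critical point `σ̄`, the `i`-th partial derivative of `P^d_{αβ}` is
`x̄ᵢ² / 2 - σ̄ᵢ / βᵢ - 1 / 2`, so `x̄ᵢ² = 1 + 2 σ̄ᵢ / βᵢ`. Comparing the diagonal entries of the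
negative definite `Q + Diag(α)` and the positive definite `G_α(σ̄)` gives `σ̄ᵢ > 0`, and
`βᵢ > (8/3) σ̄ᵢ` gives `2 σ̄ᵢ / βᵢ < 3/4`. Hence `1 < x̄ᵢ² < 7/4`, so `1 < |x̄ᵢ| < 3/2` and `x̄ᵢ`
rounds to `±1`.
-/

theorem round_eq_one_or_neg_one {x : ℝ} (h₁ : 1 / 4 < x ^ 2) (h₂ : x ^ 2 < 9 / 4) :
    round x = 1 ∨ round x = -1 := by
  rcases le_or_gt 0 x with hx | hx
  · left
    rw [round_eq_iff]
    constructor <;> push_cast <;> nlinarith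
  · right
    rw [round_eq_iff]
    constructor <;> push_cast <;> nlinarith

theorem Matrix.PosDef.pos_of_neg_posDef_of_add_diagonal {ι : Type*} [DecidableEq ι]
    {B : Matrix ι ι ℝ} {σ : ι → ℝ} (h : (B + diagonal σ).PosDef) (hB : (-B).PosDef) (i : ι) :
    0 < σ i := by
  have hBi : 0 < -B i i := hB.diag_pos
  have hσi : 0 < B i i + σ i := by simpa using h.diag_pos (i := i)
  linarith

theorem Matrix.add_diagonal_add_diagonal {ι : Type*} [DecidableEq ι] (M : Matrix ι ι ℝ)
    (a b : ι → ℝ) : M + diagonal a + diagonal b = M + diagonal (a + b) := by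
  rw [add_assoc, diagonal_add]
  rfl

section Derivatives

variable {ι : Type*} [Fintype ι]

theorem hasFDerivAt_sum_sq_div_add (β σ : ι → ℝ) :
    HasFDerivAt (fun τ : ι → ℝ => ∑ j, (τ j ^ 2 / β j + τ j))
      (∑ j, (2 * σ j / β j + 1) • ContinuousLinearMap.proj (R := ℝ) (φ := fun _ : ι => ℝ) j)
      σ := by
  refine (HasFDerivAt.fun_sum fun j _ => (((hasFDerivAt_apply j σ).pow 2).mul_const (β j)⁻¹).add
    (hasFDerivAt_apply j σ)).congr_fderiv ?_
  ext v
  simp only [Nat.add_one_sub_one, pow_one, nsmul_eq_mul, Nat.cast_ofNat, _root_.sum_apply,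
    _root_.add_apply, _root_.smul_apply, ContinuousLinearMap.proj_apply, smul_eq_mul]
  exact Finset.sum_congr rfl fun j _ => by ring

variable [DecidableEq ι]

theorem Matrix.IsSymm.inv_mul_diagonal_mul_inv_mulVec_dotProduct {A : Matrix ι ι ℝ}
    (hA : A.IsSymm) (v c : ι → ℝ) :
    ((A⁻¹ * diagonal v * A⁻¹) *ᵥ c) ⬝ᵥ c = ∑ j, v j * (A⁻¹ *ᵥ c) j ^ 2 := by
  rw [← mulVec_mulVec, ← mulVec_mulVec, dotProduct_comm, dotProduct_mulVec, ← mulVec_transpose,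
    transpose_nonsing_inv, hA.eq]
  simp only [dotProduct, mulVec_diagonal]
  exact Finset.sum_congr rfl fun j _ => by ring

attribute [local instance] Matrix.linftyOpNormedRing Matrix.linftyOpNormedAlgebra in
theorem hasFDerivAt_inv_add_diagonal_mulVec_dotProduct {M : Matrix ι ι ℝ} (hM : M.IsSymm)
    (c : ι → ℝ) {σ : ι → ℝ} (hσ : IsUnit (M + diagonal σ)) :
    HasFDerivAt (fun τ => ((M + diagonal τ)⁻¹ *ᵥ c) ⬝ᵥ c)
      (-∑ j, ((M + diagonal σ)⁻¹ *ᵥ c) j ^ 2 •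
        ContinuousLinearMap.proj (R := ℝ) (φ := fun _ : ι => ℝ) j) σ := by
  let D : (ι → ℝ) →L[ℝ] Matrix ι ι ℝ :=
    LinearMap.toContinuousLinearMap (diagonalLinearMap ι ℝ ℝ)
  let φ : Matrix ι ι ℝ →L[ℝ] ℝ := LinearMap.toContinuousLinearMap
    { toFun := fun N => (N *ᵥ c) ⬝ᵥ c
      map_add' := fun N N' => by simp only [add_mulVec, add_dotProduct]
      map_smul' := fun r N => by simp only [smul_mulVec, smul_dotProduct, RingHom.id_apply] }
  have hG : HasFDerivAt (fun τ => M + diagonal τ) D σ := D.hasFDerivAt.const_add M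
  obtain ⟨u, hu⟩ := hσ
  have hinv := hasFDerivAt_ringInverse (𝕜 := ℝ) u
  rw [coe_units_inv, hu] at hinv
  have hf : (fun τ => ((M + diagonal τ)⁻¹ *ᵥ c) ⬝ᵥ c) =
      φ ∘ Ring.inverse ∘ fun τ => M + diagonal τ := by
    funext τ
    simp [φ, nonsing_inv_eq_ringInverse]
  rw [hf]
  refine (φ.hasFDerivAt.comp σ (hinv.comp σ hG)).congr_fderiv ?_
  ext v
  change ((-((M + diagonal σ)⁻¹ * diagonal v * (M + diagonal σ)⁻¹)) *ᵥ c) ⬝ᵥ c = _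
  rw [neg_mulVec, neg_dotProduct,
    (hM.add (isSymm_diagonal σ)).inv_mul_diagonal_mul_inv_mulVec_dotProduct]
  simp [mul_comm]

noncomputable def perturbedCanonicalDual (Q : Matrix ι ι ℝ) (c α β σ : ι → ℝ) : ℝ :=
  -(1/2) * (((Q + diagonal (α + σ))⁻¹ *ᵥ c) ⬝ᵥ c)
    - (1/2) * (∑ i, ((σ i)^2 / β i + σ i)) - (1/2) * (∑ i, α i)

theorem hasFDerivAt_perturbedCanonicalDual {Q : Matrix ι ι ℝ} (hQ : Q.IsSymm) (c α β : ι → ℝ)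
    {σ : ι → ℝ} (hσ : IsUnit (Q + diagonal (α + σ))) :
    HasFDerivAt (perturbedCanonicalDual Q c α β)
      (∑ j, ((((Q + diagonal (α + σ))⁻¹ *ᵥ c) j ^ 2 - 1) / 2 - σ j / β j) •
        ContinuousLinearMap.proj (R := ℝ) (φ := fun _ : ι => ℝ) j) σ := by
  have hquad := hasFDerivAt_inv_add_diagonal_mulVec_dotProduct (hQ.add (isSymm_diagonal α)) c
    (add_diagonal_add_diagonal Q α σ ▸ hσ)
  simp only [add_diagonal_add_diagonal] at hquad
  unfold perturbedCanonicalDual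
  refine (((hquad.const_mul (-(1/2))).sub
    ((hasFDerivAt_sum_sq_div_add β σ).const_mul (1/2))).sub_const _).congr_fderiv ?_
  ext v
  simp only [one_div, smul_neg, neg_smul, neg_neg, _root_.sub_apply, _root_.smul_apply,
    _root_.sum_apply, ContinuousLinearMap.proj_apply, smul_eq_mul]
  rw [Finset.mul_sum, Finset.mul_sum, ← Finset.sum_sub_distrib]
  exact Finset.sum_congr rfl fun j _ => by ring

theorem sq_inv_mulVec_eq_of_fderiv_perturbedCanonicalDual_eq_zero {Q : Matrix ι ι ℝ}
    (hQ : Q.IsSymm) {c α β σ : ι → ℝ} (hσ : IsUnit (Q + diagonal (α + σ)))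
    (hcrit : fderiv ℝ (perturbedCanonicalDual Q c α β) σ = 0) (i : ι) :
    ((Q + diagonal (α + σ))⁻¹ *ᵥ c) i ^ 2 = 1 + 2 * σ i / β i := by
  have h := congr($((hasFDerivAt_perturbedCanonicalDual hQ c α β hσ).fderiv.symm.trans hcrit)
    (Pi.single i 1))
  simp only [_root_.sum_apply, _root_.smul_apply, ContinuousLinearMap.proj_apply, Pi.single_apply,
    smul_eq_mul, mul_ite, mul_one, mul_zero, Finset.sum_ite_eq', Finset.mem_univ, ↓reduceIte,
    _root_.zero_apply] at h
  rw [mul_div_assoc]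
  linarith

end Derivatives

theorem stmt_9_general (n : ℕ)
    (Q : Matrix (Fin n) (Fin n) ℝ) (hQ : Q.IsSymm)
    (c α β : Fin n → ℝ) (hβ : ∀ i, 0 < β i)
    (hneg : (-(Q + Matrix.diagonal α)).PosDef)
    (Pd : (Fin n → ℝ) → ℝ)
    (hPd : Pd = fun σ =>
      -(1/2) * (((Q + Matrix.diagonal (α + σ))⁻¹ *ᵥ c) ⬝ᵥ c)
        - (1/2) * (∑ i, ((σ i)^2 / β i + σ i)) - (1/2) * (∑ i, α i))
    (σbar : Fin n → ℝ)
    (hσ : (Q + Matrix.diagonal (α + σbar)).PosDef)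
    (hcrit : fderiv ℝ Pd σbar = 0)
    (hβbig : ∀ i, (8/3) * σbar i < β i)
    (xbar xstar : Fin n → ℝ)
    (hxbar : xbar = (Q + Matrix.diagonal (α + σbar))⁻¹ *ᵥ c)
    (hxstar : xstar = fun i => ((round (xbar i) : ℤ) : ℝ)) :
    ∀ i, xstar i = 1 ∨ xstar i = -1 := by
  intro i
  subst hxstar hxbar
  have hx := sq_inv_mulVec_eq_of_fderiv_perturbedCanonicalDual_eq_zero hQ hσ.isUnit
    (hPd ▸ hcrit) i
  have hσi : 0 < σbar i :=
    (add_diagonal_add_diagonal Q α σbar ▸ hσ).pos_of_neg_posDef_of_add_diagonal hneg i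
  have hratio : 2 * σbar i / β i < 3 / 4 := by
    rw [div_lt_iff₀ (hβ i)]
    linarith [hβbig i]
  have hround := round_eq_one_or_neg_one (x := ((Q + diagonal (α + σbar))⁻¹ *ᵥ c) i)
    (by rw [hx]; linarith [div_pos (mul_pos two_pos hσi) (hβ i)]) (by rw [hx]; linarith)
  rcases hround with h | h <;> simp [h]

/-- If `Q + Diag(α)` is negative definite, `βᵢ > 0`, `σ̄ ∈ S⁺_α` is a
critical point of the β-perturbed canonical dual function, and `βᵢ > (8/3)σ̄ᵢ` for
all `i`, then rounding each component of `x̄ = G_α(σ̄)⁻¹ c` gives a vector in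
`{-1,1}ⁿ`. -/
theorem stmt_9 (n : ℕ) (hn : 0 < n)
    (Q : Matrix (Fin n) (Fin n) ℝ) (hQ : Q.IsSymm)
    (c α β : Fin n → ℝ) (hβ : ∀ i, 0 < β i)
    (hneg : (-(Q + Matrix.diagonal α)).PosDef)
    (Pd : (Fin n → ℝ) → ℝ)
    (hPd : Pd = fun σ =>
      -(1/2) * (((Q + Matrix.diagonal (α + σ))⁻¹ *ᵥ c) ⬝ᵥ c)
        - (1/2) * (∑ i, ((σ i)^2 / β i + σ i)) - (1/2) * (∑ i, α i))
    (σbar : Fin n → ℝ)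
    (hσ : (Q + Matrix.diagonal (α + σbar)).PosDef)
    (hcrit : fderiv ℝ Pd σbar = 0)
    (hβbig : ∀ i, (8/3) * σbar i < β i)
    (xbar xstar : Fin n → ℝ)
    (hxbar : xbar = (Q + Matrix.diagonal (α + σbar))⁻¹ *ᵥ c)
    (hxstar : xstar = fun i => ((round (xbar i) : ℤ) : ℝ)) :
    ∀ i, xstar i = 1 ∨ xstar i = -1 :=
  stmt_9_general n Q hQ c α β hβ hneg Pd hPd σbar hσ hcrit hβbig xbar xstar hxbar hxstar
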